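/- arXiv:1008.1766 — 3 statements merged into one kernel-verified Lean document; each statement's English description precedes it below -/
import Mathlib

section
/- Let δ₁, δ₂ ∈ [0,1]. If E₁ and E₂ are independent erasure noise variables distributed as Erasure(δ₁) and Erasure(δ₂) respectively, then their erasure sum E₁ + E₂ is an erasure noise distributed as Erasure(δ₁ ∘ δ₂), where δ₁ ∘ δ₂ := δ₁ + δ₂·(1 − δ₁). Formally, the pushforward of the product PMF Erasure(δ₁) × Erasure(δ₂) under erasure addition equals the PMF Erasure(δ₁ ∘ δ₂). -/
open scoped ENNReal

/-- The erasure alphabet `{0,1,e}`, modeled as `Option Bool` with `none` the erasure symbol. -/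
abbrev Erasure := Option Bool

/-- Erasure addition: `e` if either argument is `e`, otherwise the mod-2 sum of the bits. -/
def eAdd : Erasure → Erasure → Erasure
  | none, _ => none
  | _, none => none
  | some a, some b => some (xor a b)

/-- `Erasure(δ)`: the PMF on the erasure alphabet assigning probability `δ` to the
erasure symbol `e` and probability `1 - δ` to the bit `0`. -/
noncomputable def erasurePMF (δ : ℝ) (h0 : 0 ≤ δ) (h1 : δ ≤ 1) : PMF Erasure :=
  PMF.ofFintype
    (fun x => Option.elim x (ENNReal.ofReal δ)
      (fun b => if b then 0 else ENNReal.ofReal (1 - δ)))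
    (by
      rw [Fintype.sum_option]
      simp only [Fintype.sum_bool, Option.elim_none, Option.elim_some, if_true, if_false,
        Bool.false_eq_true, zero_add]
      rw [← ENNReal.ofReal_add h0 (by linarith)]
      norm_num)

/-- The product PMF of two independent PMFs. -/
noncomputable def pmfPair {α β : Type*} (p : PMF α) (q : PMF β) : PMF (α × β) :=
  p.bind fun a => q.map (Prod.mk a)

/-- The erasure composition `δ₁ ∘ δ₂ = δ₁ + δ₂·(1 − δ₁)`. -/
def eComp (δ₁ δ₂ : ℝ) : ℝ := δ₁ + δ₂ * (1 - δ₁)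

lemma pmfPair_apply {α β : Type*} (p : PMF α) (q : PMF β) (a : α) (b : β) :
    pmfPair p q (a, b) = p a * q b := by
  classical
  simp only [pmfPair, PMF.bind_apply, PMF.map_apply]
  rw [tsum_eq_single a]
  · congr 1
    rw [tsum_eq_single b] <;> simp
    intro b' h; simp [h, Ne.symm h]
  · intro a' h
    simp [Prod.ext_iff, Ne.symm h]

lemma pmfPair_apply' {α β : Type*} (p : PMF α) (q : PMF β) (z : α × β) :
    pmfPair p q z = p z.1 * q z.2 := pmfPair_apply p q z.1 z.2

theorem eAdd_erasurePMF (δ₁ δ₂ : ℝ) (h10 : 0 ≤ δ₁) (h11 : δ₁ ≤ 1)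
    (h20 : 0 ≤ δ₂) (h21 : δ₂ ≤ 1) :
    (pmfPair (erasurePMF δ₁ h10 h11) (erasurePMF δ₂ h20 h21)).map
        (fun z => eAdd z.1 z.2) =
      erasurePMF (eComp δ₁ δ₂) (by unfold eComp; nlinarith) (by unfold eComp; nlinarith) := by
  ext x
  rw [PMF.map_apply, tsum_fintype]
  simp only [pmfPair_apply']
  have e1 : ENNReal.ofReal (1 - δ₁) + ENNReal.ofReal δ₁ = 1 := by
    rw [← ENNReal.ofReal_add (by linarith) h10]; norm_num
  rcases x with _ | b
  · simp [Fintype.sum_prod_type, Fintype.sum_option, Fintype.sum_bool, erasurePMF, eAdd, eComp,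
      PMF.ofFintype_apply]
    rw [← ENNReal.ofReal_mul h10, ← ENNReal.ofReal_mul h10, ← ENNReal.ofReal_mul (by linarith),
      ← ENNReal.ofReal_add (by nlinarith) (by nlinarith),
      ← ENNReal.ofReal_add (by nlinarith) (by nlinarith)]
    ring_nf
  · rcases b with _ | _ <;>
    · simp [Fintype.sum_prod_type, Fintype.sum_option, Fintype.sum_bool, erasurePMF, eAdd, eComp,
        PMF.ofFintype_apply]
      try (rw [← ENNReal.ofReal_mul (by linarith)]; ring_nf)
end

section
/- Fix a bit b ∈ {0,1} and let a, c ∈ [0,1] with a·c < 1. Let μ be the product PMF of two independent erased copies of b, the first with erasure probability a and the second with erasure probability c. Define ε₁ = a(1−c)/(1−ac), ε₂ = (1−a)c/(1−ac), ε₃ = (1−a)(1−c)/(1−ac). Let ν be the PMF on pairs obtained as follows: sample Z from an erased copy of b with erasure probability a·c; if Z = e output the pair (e,e); otherwise output (e,Z) with probability ε₁, (Z,e) with probability ε₂, and (Z,Z) with probability ε₃. Then ν = μ, i.e., the two-stage construction reproduces exactly the joint distribution of the two independent erased copies of b. -/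
open scoped ENNReal

/-- The erased copy of the bit `b` with erasure probability `a`: the PMF on the erasure
alphabet assigning probability `a` to the erasure symbol `e` and probability `1 - a` to `b`. -/
noncomputable def erasedCopy (b : Bool) (a : ℝ) (h0 : 0 ≤ a) (h1 : a ≤ 1) : PMF Erasure :=
  PMF.ofFintype
    (fun x => Option.elim x (ENNReal.ofReal a)
      (fun c => if c = b then ENNReal.ofReal (1 - a) else 0))
    (by
      rw [Fintype.sum_option]
      cases b <;>
        simp only [Fintype.sum_bool, Option.elim_none, Option.elim_some, if_true, if_false,
          Bool.false_eq_true, Bool.true_eq_false, reduceIte, zero_add, add_zero] <;>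
        rw [← ENNReal.ofReal_add h0 (by linarith)] <;> norm_num)

/-- The PMF taking value `x` with probability `p`, `y` with probability `q`
and `z` with probability `r`, where `p + q + r = 1`. -/
noncomputable def mix3 {α : Type*} (x y z : α) (p q r : ℝ)
    (hp : 0 ≤ p) (hq : 0 ≤ q) (hr : 0 ≤ r) (hs : p + q + r = 1) : PMF α :=
  (PMF.ofFintype
    (fun i : Fin 3 =>
      if i = 0 then ENNReal.ofReal p else if i = 1 then ENNReal.ofReal q else ENNReal.ofReal r)
    (by
      rw [Fin.sum_univ_three]
      simp only [show (0 : Fin 3) ≠ 1 by decide, show (1 : Fin 3) ≠ 0 by decide,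
        show (2 : Fin 3) ≠ 0 by decide, show (2 : Fin 3) ≠ 1 by decide, if_true, if_false,
        reduceIte]
      rw [← ENNReal.ofReal_add hp hq, ← ENNReal.ofReal_add (by linarith) hr, hs,
        ENNReal.ofReal_one])).map
    (fun i => if i = 0 then x else if i = 1 then y else z)

theorem twoStage_eq_prod (b : Bool) (a c : ℝ) (ha0 : 0 ≤ a) (ha1 : a ≤ 1)
    (hc0 : 0 ≤ c) (hc1 : c ≤ 1) (hac : a * c < 1) :
    ((erasedCopy b (a * c) (mul_nonneg ha0 hc0) hac.le).bind fun Z =>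
        match Z with
        | none => PMF.pure ((none : Erasure), (none : Erasure))
        | some v =>
            mix3 ((none : Erasure), (some v : Erasure)) (some v, none) (some v, some v)
              (a * (1 - c) / (1 - a * c)) ((1 - a) * c / (1 - a * c))
              ((1 - a) * (1 - c) / (1 - a * c))
              (div_nonneg (by nlinarith) (by linarith))
              (div_nonneg (by nlinarith) (by linarith))
              (div_nonneg (by nlinarith) (by linarith))
              (by
                have h : (1 : ℝ) - a * c ≠ 0 := ne_of_gt (by linarith)
                field_simp
                ring)) =
      pmfPair (erasedCopy b a ha0 ha1) (erasedCopy b c hc0 hc1) := by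
  have hne : (1 : ℝ) - a * c ≠ 0 := ne_of_gt (by linarith)
  ext ⟨x, y⟩
  simp only [PMF.bind_apply, pmfPair, PMF.map_apply, erasedCopy, mix3, PMF.ofFintype_apply,
    tsum_fintype, Fintype.sum_option, Fintype.sum_bool, Fin.sum_univ_three, PMF.pure_apply,
    Option.elim]
  cases b <;> rcases x with _ | (_|_) <;> rcases y with _ | (_|_) <;>
    simp only [Prod.mk.injEq, reduceIte, if_true, if_false, and_false, false_and, and_true,
      true_and, and_self, mul_zero, mul_one, zero_add, add_zero, zero_mul, one_mul,
      ENNReal.ofReal_zero, Option.some.injEq, reduceCtorEq, Bool.false_eq_true,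
      Bool.true_eq_false, show (2:Fin 3) ≠ 0 by decide, show (2:Fin 3) ≠ 1 by decide,
      show (1:Fin 3) ≠ 0 by decide, show (0:Fin 3) ≠ 1 by decide]
  all_goals
    rw [← ENNReal.ofReal_mul (by linarith)]
    try
      first
        | rw [← ENNReal.ofReal_mul ha0]
        | rw [← ENNReal.ofReal_mul (show (0:ℝ) ≤ 1 - a by linarith)]
    try (congr 1; rw [mul_comm]; exact div_mul_cancel₀ _ hne)
end

section
/- Let δ⋆, δ₀, ε be real numbers with 0 ≤ δ⋆ ≤ δ₀ − ε, 0 < ε < δ₀, and δ₀ ≤ 1. Let P : ℝ → ℝ be a measurable function such that 0 ≤ P(δ) ≤ δ for all δ ∈ [δ⋆, 1] and P(δ) ≤ δ₀ − ε for all δ ∈ [δ₀ − ε, δ₀]. Then ∫_{δ⋆}^{1} P(δ)/δ dδ ≤ (1 − δ⋆) − (ε − (δ₀ − ε)·ln(δ₀/(δ₀ − ε))). -/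
open MeasureTheory

theorem map_erasure_integral_bound (δs δ₀ ε : ℝ) (P : ℝ → ℝ)
    (hδs0 : 0 ≤ δs) (hδs : δs ≤ δ₀ - ε) (hε : 0 < ε) (hεδ : ε < δ₀) (hδ₀ : δ₀ ≤ 1)
    (hmeas : Measurable P)
    (hP1 : ∀ δ ∈ Set.Icc δs 1, 0 ≤ P δ ∧ P δ ≤ δ)
    (hP2 : ∀ δ ∈ Set.Icc (δ₀ - ε) δ₀, P δ ≤ δ₀ - ε) :
    (∫ δ in δs..1, P δ / δ) ≤
      (1 - δs) - (ε - (δ₀ - ε) * Real.log (δ₀ / (δ₀ - ε))) := by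
  set a := δ₀ - ε with ha_def
  have ha : 0 < a := by rw [ha_def]; linarith
  have haδ : a ≤ δ₀ := by rw [ha_def]; linarith
  have hδs1 : δs ≤ 1 := by linarith
  have ha1 : a ≤ 1 := le_trans haδ hδ₀
  have hδ₀0 : 0 < δ₀ := lt_of_lt_of_le ha haδ
  -- pointwise facts
  have hfle : ∀ δ ∈ Set.Icc δs 1, P δ / δ ≤ 1 := by
    intro δ hδ
    obtain ⟨h0, h1⟩ := hP1 δ hδ
    rcases eq_or_lt_of_le (le_trans hδs0 hδ.1) with h | h
    · subst h
      have : P 0 = 0 := le_antisymm h1 h0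
      simp [this]
    · exact (div_le_one h).mpr h1
  have hfnn : ∀ δ ∈ Set.Icc δs 1, 0 ≤ P δ / δ := by
    intro δ hδ
    obtain ⟨h0, _⟩ := hP1 δ hδ
    exact div_nonneg h0 (le_trans hδs0 hδ.1)
  -- integrability of the main function on [δs, 1]
  have hmeasf : Measurable fun δ => P δ / δ := hmeas.div measurable_id
  have hint : IntervalIntegrable (fun δ => P δ / δ) volume δs 1 := by
    rw [intervalIntegrable_iff_integrableOn_Icc_of_le hδs1]
    apply Measure.integrableOn_of_bounded (M := 1) measure_Icc_lt_top.ne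
      hmeasf.aestronglyMeasurable
    filter_upwards [ae_restrict_mem measurableSet_Icc] with δ hδ
    rw [Real.norm_eq_abs, abs_of_nonneg (hfnn δ hδ)]
    exact hfle δ hδ
  have hmem : ∀ x y : ℝ, δs ≤ x → x ≤ 1 → δs ≤ y → y ≤ 1 →
      Set.uIcc x y ⊆ Set.uIcc δs 1 := by
    intro x y hx1 hx2 hy1 hy2
    apply Set.uIcc_subset_uIcc <;> rw [Set.mem_uIcc] <;> left <;> constructor <;> assumption
  have hint1 : IntervalIntegrable (fun δ => P δ / δ) volume δs a :=
    hint.mono_set (hmem _ _ le_rfl hδs1 hδs ha1)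
  have hint2 : IntervalIntegrable (fun δ => P δ / δ) volume a δ₀ :=
    hint.mono_set (hmem _ _ hδs ha1 (le_trans hδs haδ) hδ₀)
  have hint3 : IntervalIntegrable (fun δ => P δ / δ) volume δ₀ 1 :=
    hint.mono_set (hmem _ _ (le_trans hδs haδ) hδ₀ hδs1 le_rfl)
  -- integrability of a/x on [a, δ₀]
  have hintg : IntervalIntegrable (fun δ => a / δ) volume a δ₀ := by
    apply ContinuousOn.intervalIntegrable
    apply ContinuousOn.div continuousOn_const continuousOn_id
    intro x hx
    rw [Set.uIcc_of_le haδ] at hx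
    exact ne_of_gt (lt_of_lt_of_le ha hx.1)
  -- split the integral
  have hsplit : (∫ δ in δs..1, P δ / δ) =
      (∫ δ in δs..a, P δ / δ) + (∫ δ in a..δ₀, P δ / δ) + (∫ δ in δ₀..1, P δ / δ) := by
    rw [intervalIntegral.integral_add_adjacent_intervals hint1 hint2,
      intervalIntegral.integral_add_adjacent_intervals (hint1.trans hint2) hint3]
  -- bound each piece
  have hb1 : (∫ δ in δs..a, P δ / δ) ≤ a - δs := by
    calc (∫ δ in δs..a, P δ / δ) ≤ ∫ δ in δs..a, (1:ℝ) := by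
          apply intervalIntegral.integral_mono_on hδs hint1 intervalIntegrable_const
          intro δ hδ
          exact hfle δ ⟨hδ.1, le_trans hδ.2 ha1⟩
      _ = a - δs := by simp
  have hb3 : (∫ δ in δ₀..1, P δ / δ) ≤ 1 - δ₀ := by
    calc (∫ δ in δ₀..1, P δ / δ) ≤ ∫ δ in δ₀..1, (1:ℝ) := by
          apply intervalIntegral.integral_mono_on hδ₀ hint3 intervalIntegrable_const
          intro δ hδ
          exact hfle δ ⟨le_trans (le_trans hδs haδ) hδ.1, hδ.2⟩
      _ = 1 - δ₀ := by simp
  have hb2 : (∫ δ in a..δ₀, P δ / δ) ≤ a * Real.log (δ₀ / a) := by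
    have key : (∫ δ in a..δ₀, P δ / δ) ≤ ∫ δ in a..δ₀, a / δ := by
      apply intervalIntegral.integral_mono_on haδ hint2 hintg
      intro δ hδ
      have hδpos : 0 < δ := lt_of_lt_of_le ha hδ.1
      exact (div_le_div_iff_of_pos_right hδpos).mpr (hP2 δ hδ)
    have hlog : (∫ δ in a..δ₀, a / δ) = a * Real.log (δ₀ / a) := by
      have : (∫ δ in a..δ₀, a / δ) = a * ∫ δ in a..δ₀, 1 / δ := by
        rw [← intervalIntegral.integral_const_mul]
        congr 1; ext δ; ring
      rw [this, integral_one_div (by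
        rw [Set.uIcc_of_le haδ]
        intro hx
        exact absurd hx.1 (not_le.mpr ha))]
    linarith [hlog ▸ key]
  rw [hsplit, ha_def] at *
  linarith
end
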